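/- For any GNFSTA with pure states A = (Σ, Q, Q_f, Q₀, Δ, γ) over Σ there exists an equivalent deterministic FSTA: the DFSTA A' = (Σ', Q', Q'_f, q'₀, Δ') over the alphabet Σ' = {{a} | a ∈ Σ}, with Q' = 2^Q, q'₀ = Q₀, Q'_f = {q' ∈ Q' | q' ∩ Q_f ≠ ∅}, and Δ'(a', b') = {c ∈ Q | (a, b) → c ∈ Δ, a ∈ a', b ∈ γ(b')} (where γ is extended by γ(a) = {a} for a ∈ Σ and γ of a set is the union of the images of its elements), recognises exactly the image of L(A) under the bijection T(Σ) → T(Σ') induced by a ↦ {a}. -/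

import Mathlib

/-!  Common definitions: string trees over an alphabet (following
N. Schmidt, A. Patel, "Using Tree Automata and Regular Expressions to
Manipulate Hierarchically Structured Data").

Symbols: an ambient type `U` of "plain" symbols, extended with the two
angle brackets and the slash. -/

inductive TSym (U : Type) : Type where
  | op : TSym U          -- ⟨
  | cl : TSym U          -- ⟩
  | slash : TSym U       -- /
  | ltr : U → TSym U     -- a plain symbol

namespace StringTree

variable {U V : Type}

/-- The letters of an alphabet `S ⊆ U`, viewed as (non-bracket) symbols. -/
def ltrs (S : Set U) : Set (TSym U) := {x | ∃ a ∈ S, x = TSym.ltr a}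

/-- String trees over a set `S` of allowed non-bracket symbols:
`⟨⟩ ∈ T`, `⟨a⟩ ∈ T` for `a ∈ S`, closed under concatenation
`⟨x⟩·⟨y⟩ = ⟨xy⟩` and encapsulation `t ↦ ⟨t⟩`. -/
inductive IsTree (S : Set (TSym U)) : List (TSym U) → Prop where
  | nil : IsTree S [TSym.op, TSym.cl]
  | single {x : TSym U} : x ∈ S → IsTree S [TSym.op, x, TSym.cl]
  | concat {x y : List (TSym U)} :
      IsTree S (TSym.op :: (x ++ [TSym.cl])) → IsTree S (TSym.op :: (y ++ [TSym.cl])) →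
      IsTree S (TSym.op :: ((x ++ y) ++ [TSym.cl]))
  | encap {t : List (TSym U)} : IsTree S t → IsTree S (TSym.op :: (t ++ [TSym.cl]))

/-- `T(Σ)`, the set of string trees over the alphabet `Σ ⊆ U`. -/
def TreeSet (S : Set U) : Set (List (TSym U)) := {t | IsTree (ltrs S) t}

/-- A plain string, viewed as a string of symbols. -/
def strOf (s : List U) : List (TSym U) := s.map TSym.ltr

/-- Move relation of a generalised non-deterministic finite string tree
automaton with initial states `Q0`, horizontal rules `Δ` and vertical
rules `γ`:
(a) `l⟨s⟩r ⇒ l⟨a/s⟩r` if `a ∈ Q0` (initial state assignment);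
(b) `l⟨a/bs⟩r ⇒ l⟨c/s⟩r` if `(a,b) → c ∈ Δ` (horizontal move);
(c) `l⟨a/⟩r ⇒ lbr` if `b ∈ γ a` (vertical move). -/
inductive GMove (Q0 : Set U) (Δ : Set (U × U × U)) (γ : U → Set U) :
    List (TSym U) → List (TSym U) → Prop where
  | init {l r : List (TSym U)} {s : List U} {a : U} :
      a ∈ Q0 →
      GMove Q0 Δ γ (l ++ [TSym.op] ++ strOf s ++ [TSym.cl] ++ r)
        (l ++ [TSym.op, TSym.ltr a, TSym.slash] ++ strOf s ++ [TSym.cl] ++ r)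
  | horiz {l r : List (TSym U)} {s : List U} {a b c : U} :
      (a, b, c) ∈ Δ →
      GMove Q0 Δ γ (l ++ [TSym.op, TSym.ltr a, TSym.slash, TSym.ltr b] ++ strOf s ++ [TSym.cl] ++ r)
        (l ++ [TSym.op, TSym.ltr c, TSym.slash] ++ strOf s ++ [TSym.cl] ++ r)
  | vert {l r : List (TSym U)} {a b : U} :
      b ∈ γ a →
      GMove Q0 Δ γ (l ++ [TSym.op, TSym.ltr a, TSym.slash, TSym.cl] ++ r)
        (l ++ [TSym.ltr b] ++ r)

/-- Move relation of an NFSTA: the GNFSTA moves with the single initial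
state `q0` and with the vertical move `l⟨a/⟩r ⇒ lar`. -/
def NMove (q0 : U) (Δ : Set (U × U × U)) : List (TSym U) → List (TSym U) → Prop :=
  GMove {q0} Δ (fun a => {a})

/-- The final tree `⟨q/⟩`. -/
def finalTree (q : U) : List (TSym U) := [TSym.op, TSym.ltr q, TSym.slash, TSym.cl]

/-- Acceptance by a GNFSTA: `t ⇒* ⟨q_f/⟩` for some `q_f ∈ Q_f`. -/
def GAccepts (Q0 : Set U) (Δ : Set (U × U × U)) (γ : U → Set U) (Qf : Set U)
    (t : List (TSym U)) : Prop :=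
  ∃ qf ∈ Qf, Relation.ReflTransGen (GMove Q0 Δ γ) t (finalTree qf)

/-- The language of a GNFSTA: the set of trees of `T(Σ)` it accepts. -/
def GLang (Sa Q0 : Set U) (Δ : Set (U × U × U)) (γ : U → Set U) (Qf : Set U) :
    Set (List (TSym U)) :=
  {t | t ∈ TreeSet Sa ∧ GAccepts Q0 Δ γ Qf t}

/-- Acceptance by an NFSTA. -/
def NAccepts (q0 : U) (Δ : Set (U × U × U)) (Qf : Set U) (t : List (TSym U)) : Prop :=
  GAccepts {q0} Δ (fun a => {a}) Qf t

/-- The language of an NFSTA. -/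
def NLang (Sa : Set U) (q0 : U) (Δ : Set (U × U × U)) (Qf : Set U) : Set (List (TSym U)) :=
  GLang Sa {q0} Δ (fun a => {a}) Qf

/-- Well-formedness of a GNFSTA `(Σ, Q, Q_f, Q₀, Δ, γ)`:
`Q` is finite, `Σ ⊆ Q`, `Q_f ⊆ Q`, `Q₀ ⊆ Q`, the rules of `Δ` are over `Q`,
and `γ` maps states of `Q` to sets of states of `Q`. -/
def GWF (Sa Q Qf Q0 : Set U) (Δ : Set (U × U × U)) (γ : U → Set U) : Prop :=
  Q.Finite ∧ Sa ⊆ Q ∧ Qf ⊆ Q ∧ Q0 ⊆ Q ∧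
    (∀ p ∈ Δ, p.1 ∈ Q ∧ p.2.1 ∈ Q ∧ p.2.2 ∈ Q) ∧ (∀ q ∈ Q, γ q ⊆ Q)

/-- Well-formedness of an NFSTA `(Σ, Q, Q_f, q₀, Δ)`. -/
def NWF (Sa Q Qf : Set U) (q0 : U) (Δ : Set (U × U × U)) : Prop :=
  Q.Finite ∧ Sa ⊆ Q ∧ Qf ⊆ Q ∧ q0 ∈ Q ∧ ∀ p ∈ Δ, p.1 ∈ Q ∧ p.2.1 ∈ Q ∧ p.2.2 ∈ Q

/-- A GNFSTA has pure states: no horizontal or vertical rule produces a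
symbol of `Σ`, no horizontal rule has its state (first) component in `Σ`,
`γ(a) = ∅` for `a ∈ Σ`, and `Q₀ ∪ Q_f ⊆ Q ∖ Σ`. -/
def PureG (Sa Q Qf Q0 : Set U) (Δ : Set (U × U × U)) (γ : U → Set U) : Prop :=
  (∀ p ∈ Δ, p.1 ∉ Sa ∧ p.2.2 ∉ Sa) ∧ (∀ a ∈ Sa, γ a = ∅) ∧
    (∀ q : U, ∀ p ∈ γ q, p ∉ Sa) ∧ Q0 ⊆ Q \ Sa ∧ Qf ⊆ Q \ Sa

/-- An NFSTA has pure states. -/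
def PureN (Sa Q Qf : Set U) (q0 : U) (Δ : Set (U × U × U)) : Prop :=
  (∀ p ∈ Δ, p.1 ∉ Sa ∧ p.2.2 ∉ Sa) ∧ q0 ∈ Q \ Sa ∧ Qf ⊆ Q \ Sa


/-! Additional notions. -/

/-- `⟨s₀ t₁ s₁ ⋯ tₙ sₙ⟩`: the string tree assembled from a head string `s₀`
and a list of pairs `(tᵢ, sᵢ)` of a subtree and a following string. -/
def flatRep (s0 : List U) (rest : List (List (TSym U) × List U)) : List (TSym U) :=
  TSym.op :: (strOf s0 ++ (rest.map (fun p => p.1 ++ strOf p.2)).flatten ++ [TSym.cl])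

/-- The inner string of a tree `⟨x⟩`, i.e. `x`. -/
def innerStr (t : List (TSym U)) : List (TSym U) := (t.drop 1).dropLast

/-- Tree concatenation `⟨x⟩·⟨y⟩ = ⟨xy⟩`. -/
def tconc (u v : List (TSym U)) : List (TSym U) :=
  TSym.op :: ((innerStr u ++ innerStr v) ++ [TSym.cl])

/-- The null tree `⟨⟩`. -/
def nilTree : List (TSym U) := [TSym.op, TSym.cl]

/-- `w` is a string over `Q ∪ {/}`. -/
def OverQSlash (Q : Set U) (w : List (TSym U)) : Prop :=
  ∀ x ∈ w, x = TSym.slash ∨ ∃ q ∈ Q, x = TSym.ltr q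

/-- Renaming of symbols along a map of plain symbols. -/
def symRel (f : U → V) : TSym U → TSym V
  | TSym.op => TSym.op
  | TSym.cl => TSym.cl
  | TSym.slash => TSym.slash
  | TSym.ltr a => TSym.ltr (f a)

/-- Renaming of the symbols of a tree along a map of plain symbols. -/
def treeRel (f : U → V) (t : List (TSym U)) : List (TSym V) := t.map (symRel f)

/-- The injective renaming `a ↦ {a}`. -/
def sing : U → Set U := fun a => {a}

/-- The vertical-rule function `γ` of a pure-state GNFSTA, extended by
`γ(a) = {a}` for `a ∈ Σ` and to sets by unions: `γ(b') = ⋃_{b ∈ b'} γ(b)`. -/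
def gammaExt (Sa : Set U) (γ : U → Set U) (b' : Set U) : Set U :=
  {c | ∃ b ∈ b', c ∈ γ b ∨ (c = b ∧ b ∈ Sa)}

/-- The transition function of the subset construction:
`Δ'(a', b') = {c | (a,b) → c ∈ Δ, a ∈ a', b ∈ γ(b')}`. -/
def subsetDelta (Sa : Set U) (γ : U → Set U) (Δ : Set (U × U × U)) (a' b' : Set U) : Set U :=
  {c | ∃ a ∈ a', ∃ b ∈ gammaExt Sa γ b', (a, b, c) ∈ Δ}

/-- The rule set of the subset-construction DFSTA, defined on pairs of
subsets of `Q`. -/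
def subsetRules (Sa : Set U) (γ : U → Set U) (Δ : Set (U × U × U)) (Q : Set U) :
    Set (Set U × Set U × Set U) :=
  {x | x.1 ⊆ Q ∧ x.2.1 ⊆ Q ∧ x.2.2 = subsetDelta Sa γ Δ x.1 x.2.1}

/-- A rule set is deterministic: at most one rule per left-hand side. -/
def Deterministic {α : Type} (Δ : Set (α × α × α)) : Prop :=
  ∀ a b c₁ c₂, (a, b, c₁) ∈ Δ → (a, b, c₂) ∈ Δ → c₁ = c₂

/-- `L` is recognised by some GNFSTA over the alphabet `Sa`. -/
def RecogG (Sa : Set U) (L : Set (List (TSym U))) : Prop :=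
  ∃ Q Qf Q0 Δ γ, GWF Sa Q Qf Q0 Δ γ ∧ GLang Sa Q0 Δ γ Qf = L

/-- `L` is recognised by some NFSTA over the alphabet `Sa`. -/
def RecogN (Sa : Set U) (L : Set (List (TSym U))) : Prop :=
  ∃ Q Qf q0 Δ, NWF Sa Q Qf q0 Δ ∧ NLang Sa q0 Δ Qf = L

/-- `L` is recognised, after the injective alphabet renaming `a ↦ {a}`,
by some deterministic FSTA. -/
def RecogD (Sa : Set U) (L : Set (List (TSym U))) : Prop :=
  ∃ (Q' Qf' : Set (Set U)) (q0' : Set U) (Δ' : Set (Set U × Set U × Set U)),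
    NWF (sing '' Sa) Q' Qf' q0' Δ' ∧ Deterministic Δ' ∧
    NLang (sing '' Sa) q0' Δ' Qf' = treeRel sing '' L

/-- Runs of a classical finite (string) automaton with transition map `δ`. -/
inductive FASteps (δ : U → U → Set U) : U → List U → U → Prop where
  | nil (q : U) : FASteps δ q [] q
  | cons {q a p s q'} : p ∈ δ q a → FASteps δ p s q' → FASteps δ q (a :: s) q'

/-- The language of a classical finite automaton `(Sa, Q, Q_f, q₀, δ)`. -/
def FALang (Sa : Set U) (δ : U → U → Set U) (q0 : U) (Qf : Set U) : Set (List U) :=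
  {s | (∀ a ∈ s, a ∈ Sa) ∧ ∃ qf ∈ Qf, FASteps δ q0 s qf}

/-- `n`-fold composition of a relation: `relPow r n a b` iff `a ⇒ⁿ b`. -/
def relPow {α : Type} (r : α → α → Prop) : ℕ → α → α → Prop
  | 0, a, b => a = b
  | n + 1, a, c => ∃ b, r a b ∧ relPow r n b c


/-! Ranked terms and classical tree automata. -/

/-- Unranked terms (rose trees) over a symbol type `F`. -/
inductive PreTerm (F : Type) : Type where
  | node : F → List (PreTerm F) → PreTerm F

/-- A term is well-ranked w.r.t. an arity function. -/
inductive WellRanked {F : Type} (ar : F → ℕ) : PreTerm F → Prop where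
  | node {f : F} {ts : List (PreTerm F)} : ts.length = ar f →
      (∀ t ∈ ts, WellRanked ar t) → WellRanked ar (PreTerm.node f ts)

/-- The term-to-string-tree map `τ`:
`τ(f(t₁,…,t_p)) = ⟨f τ(t₁) ⋯ τ(t_p)⟩` (and `τ(a) = ⟨a⟩` for constants). -/
def tau {F : Type} : PreTerm F → List (TSym F)
  | PreTerm.node f ts =>
      TSym.op :: TSym.ltr f :: ((ts.attach.map (fun x => tau x.1)).flatten ++ [TSym.cl])
  decreasing_by
    simp only [PreTerm.node.sizeOf_spec]
    have h := List.sizeOf_lt_of_mem x.2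
    omega

/-- A term over the ranked alphabet given by symbols `Sa` and arities `ar`. -/
inductive GoodTerm (Sa : Set U) (ar : U → ℕ) : PreTerm U → Prop where
  | node {f : U} {ts : List (PreTerm U)} : f ∈ Sa → ts.length = ar f →
      (∀ t ∈ ts, GoodTerm Sa ar t) → GoodTerm Sa ar (PreTerm.node f ts)

/-- Bottom-up runs of a classical tree automaton with rules
`f(q₁,…,qₙ) → q`: `CRun Δh t q` means the run assigns state `q` to `t`. -/
inductive CRun (Δh : Set (U × List U × U)) : PreTerm U → U → Prop where
  | node {f : U} {ts : List (PreTerm U)} {qs : List U} {q : U} :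
      (f, qs, q) ∈ Δh → qs.length = ts.length →
      (∀ p ∈ ts.zip qs, CRun Δh p.1 p.2) →
      CRun Δh (PreTerm.node f ts) q

/-- The term language of a classical tree automaton. -/
def TermLang (Sa : Set U) (ar : U → ℕ) (Δh : Set (U × List U × U)) (Qhf : Set U) :
    Set (PreTerm U) :=
  {t | GoodTerm Sa ar t ∧ ∃ q ∈ Qhf, CRun Δh t q}

/-! Vertical tree representation of strings. -/

def omegaRev : List U → List (TSym U)
  | [] => [TSym.op, TSym.cl]
  | a :: s => TSym.op :: (omegaRev s ++ [TSym.ltr a, TSym.cl])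

/-- The vertical tree representation `ω(a₁⋯aₙ) = ⟨⟨⋯⟨⟩a₁⟩a₂⟩⋯aₙ⟩`,
defined by `ω(ε) = ⟨⟩` and `ω(sa) = ⟨ω(s)⟩·⟨a⟩`. -/
def omega (s : List U) : List (TSym U) := omegaRev s.reverse

/-! Regular string tree grammars. -/

/-- A regular expression is over the symbol set `S`. -/
def REOver (S : Set U) : RegularExpression U → Prop
  | RegularExpression.zero => True
  | RegularExpression.epsilon => True
  | RegularExpression.char a => a ∈ S
  | RegularExpression.plus e₁ e₂ => REOver S e₁ ∧ REOver S e₂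
  | RegularExpression.comp e₁ e₂ => REOver S e₁ ∧ REOver S e₂
  | RegularExpression.star e => REOver S e

/-- One derivation step of a regular string tree grammar with rule set `R`:
`lXr →_G l⟨x⟩r` whenever `X → ⟨e⟩ ∈ R` and `x ∈ ⟦e⟧`. -/
def GDeriv (R : Set (U × RegularExpression U)) (u v : List (TSym U)) : Prop :=
  ∃ (l r : List (TSym U)) (X : U) (e : RegularExpression U) (x : List U),
    (X, e) ∈ R ∧ x ∈ e.matches' ∧
    u = l ++ [TSym.ltr X] ++ r ∧ v = l ++ (TSym.op :: (strOf x ++ [TSym.cl])) ++ r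

/-- The language generated by a regular string tree grammar with axiom `S`:
all trees of `T(Σ)` derivable from `S`. -/
def GramLang (Sa : Set U) (S : U) (R : Set (U × RegularExpression U)) :
    Set (List (TSym U)) :=
  {t | t ∈ TreeSet Sa ∧ Relation.ReflTransGen (GDeriv R) [TSym.ltr S] t}

/-- Well-formedness of a regular string tree grammar `(Σ, N, S, R)`. -/
def GramWF (Sa N : Set U) (S : U) (R : Set (U × RegularExpression U)) : Prop :=
  N.Finite ∧ Disjoint N Sa ∧ S ∈ N ∧ ∀ p ∈ R, p.1 ∈ N ∧ REOver (Sa ∪ N) p.2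

/-! The map `Γ` and the instance relation `⊴` of the subset-construction
equivalence proof. -/

/-- `Γ` applies (the extension of) `γ` to every set-symbol that is not
immediately followed by a slash:
`Γ(ε)=ε`, `Γ(⟨s)=⟨Γ(s)`, `Γ(⟩s)=⟩Γ(s)`, `Γ(a/s)=a/Γ(s)`, `Γ(as)=γ(a)Γ(s)`. -/
def GammaMap (g : Set U → Set U) : List (TSym (Set U)) → List (TSym (Set U))
  | [] => []
  | TSym.op :: s => TSym.op :: GammaMap g s
  | TSym.cl :: s => TSym.cl :: GammaMap g s
  | TSym.slash :: s => TSym.slash :: GammaMap g s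
  | TSym.ltr a :: TSym.slash :: s => TSym.ltr a :: TSym.slash :: GammaMap g s
  | TSym.ltr a :: s => TSym.ltr (g a) :: GammaMap g s

/-- Symbol-wise instance relation: brackets and slashes match, and a plain
symbol is an element of the corresponding set-symbol. -/
inductive SymInst : TSym U → TSym (Set U) → Prop where
  | op : SymInst TSym.op TSym.op
  | cl : SymInst TSym.cl TSym.cl
  | slash : SymInst TSym.slash TSym.slash
  | ltr {a : U} {A : Set U} : a ∈ A → SymInst (TSym.ltr a) (TSym.ltr A)

/-- `v ⊴ v'`: `v` is an instance of `v'`. -/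
def Inst (v : List (TSym U)) (v' : List (TSym (Set U))) : Prop :=
  List.Forall₂ SymInst v v'

end StringTree

namespace StringTree

/-- The final state set `Q'_f = {q' ∈ 2^Q | q' ∩ Q_f ≠ ∅}` of the subset
construction. -/
def subsetFinals {U : Type} (Q Qf : Set U) : Set (Set U) :=
  {q' | q' ⊆ Q ∧ (q' ∩ Qf).Nonempty}

/-! ### Auxiliary development for the subset construction -/

section Aux
variable {U V : Type}

/-- Parsed items of automaton configurations: letters, and groups
`⟨items⟩` / `⟨a/items⟩`. -/
inductive It (U : Type) : Type where
  | ltr : U → It U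
  | tr : Option U → List (It U) → It U

/-- Flattening of the optional active head. -/
def actFlat : Option U → List (TSym U)
  | none => []
  | some a => [TSym.ltr a, TSym.slash]

/-- Flattening of an item to a string. -/
def flatIt : It U → List (TSym U)
  | It.ltr a => [TSym.ltr a]
  | It.tr act items =>
      TSym.op :: (actFlat act ++ (items.attach.map (fun z => flatIt z.1)).flatten ++ [TSym.cl])
  decreasing_by
    simp only [It.tr.sizeOf_spec]
    have h := List.sizeOf_lt_of_mem z.2
    omega

/-- Flattening of a list of items. -/
def flatL (items : List (It U)) : List (TSym U) := (items.map flatIt).flatten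

@[simp] lemma flatIt_ltr (a : U) : flatIt (It.ltr a) = [TSym.ltr a] := by rw [flatIt]

lemma flatIt_tr (act : Option U) (items : List (It U)) :
    flatIt (It.tr act items) = TSym.op :: (actFlat act ++ flatL items ++ [TSym.cl]) := by
  rw [flatIt, flatL, List.attach_map_val]

@[simp] lemma flatL_nil : flatL ([] : List (It U)) = [] := rfl

@[simp] lemma flatL_cons (x : It U) (s : List (It U)) :
    flatL (x :: s) = flatIt x ++ flatL s := by simp [flatL]

@[simp] lemma flatL_append (s t : List (It U)) : flatL (s ++ t) = flatL s ++ flatL t := by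
  simp [flatL]

lemma flatIt_ne_nil (x : It U) : flatIt x ≠ [] := by
  cases x with
  | ltr a => simp
  | tr act items => rw [flatIt_tr]; simp

/-- The bracket weight of a symbol. -/
def bal : TSym U → ℤ
  | TSym.op => 1
  | TSym.cl => -1
  | _ => 0

/-- The bracket excess of a string. -/
def excess (s : List (TSym U)) : ℤ := (s.map bal).sum

@[simp] lemma excess_nil : excess ([] : List (TSym U)) = 0 := rfl

@[simp] lemma excess_cons (c : TSym U) (s : List (TSym U)) :
    excess (c :: s) = bal c + excess s := by simp [excess]

@[simp] lemma excess_append (s t : List (TSym U)) :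
    excess (s ++ t) = excess s + excess t := by simp [excess]

lemma excess_eq_zero_of_flat {s : List (TSym U)} (h : ∀ c ∈ s, bal c = 0) : excess s = 0 := by
  induction s with
  | nil => rfl
  | cons c t ih =>
      simp only [excess_cons, h c (by simp)]
      rw [ih (fun d hd => h d (by simp [hd]))]
      ring

lemma bal_actFlat (act : Option U) : ∀ c ∈ actFlat act, bal c = 0 := by
  cases act <;> simp [actFlat, bal]

lemma excess_actFlat (act : Option U) : excess (actFlat act) = 0 :=
  excess_eq_zero_of_flat (bal_actFlat act)

lemma bal_strOf (s : List U) : ∀ c ∈ strOf s, bal c = 0 := by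
  intro c hc
  simp only [strOf, List.mem_map] at hc
  obtain ⟨a, _, rfl⟩ := hc
  rfl

mutual
theorem excess_flatIt (x : It U) : excess (flatIt x) = 0 := by
  cases x with
  | ltr a => simp [bal]
  | tr act items =>
      rw [flatIt_tr]
      simp [excess_flatL items, excess_actFlat, bal]
termination_by sizeOf x

theorem excess_flatL (items : List (It U)) : excess (flatL items) = 0 := by
  cases items with
  | nil => simp
  | cons x rest => simp [excess_flatIt x, excess_flatL rest]
termination_by sizeOf items
end

mutual
theorem pre_pos (x : It U) (p q : List (TSym U)) (h : flatIt x = p ++ q)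
    (hp : p ≠ []) (hq : q ≠ []) : 1 ≤ excess p := by
  cases x with
  | ltr a =>
      simp only [flatIt_ltr] at h
      rcases p with _ | ⟨c, p'⟩
      · exact absurd rfl hp
      · rcases p' with _ | _
        · simp at h
          obtain ⟨rfl, h2⟩ := h
          exact absurd h2 hq
        · simp at h
  | tr act items =>
      rw [flatIt_tr] at h
      rcases p with _ | ⟨c, p'⟩
      · exact absurd rfl hp
      · rw [List.cons_append] at h
        injection h with h1 h2
        subst h1
        rw [List.append_assoc] at h2
        have hp' : 0 ≤ excess p' := by
          rcases List.append_eq_append_iff.1 h2 with ⟨k, hk1, hk2⟩ | ⟨k, hk1, hk2⟩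
          · -- p' = actFlat ++ k, flatL items ++ [cl] = k ++ q
            have hk : 0 ≤ excess k := by
              rcases List.append_eq_append_iff.1 hk2.symm with ⟨j, hj1, hj2⟩ | ⟨j, hj1, hj2⟩
              · -- flatL items = k ++ j
                have := preL items k j hj1
                omega
              · -- k = flatL items ++ j, [cl] = j ++ q
                rcases j with _ | ⟨d, j'⟩
                · rw [List.append_nil] at hj1
                  rw [hj1, excess_flatL]
                · simp at hj2
                  obtain ⟨rfl, rfl, rfl⟩ := hj2
                  exact absurd rfl hq
            rw [hk1]
            simp [excess_actFlat]
            omega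
          · -- actFlat = p' ++ k
            have : excess p' = 0 := by
              apply excess_eq_zero_of_flat
              intro c hc
              exact bal_actFlat act c (by rw [hk1]; exact List.mem_append_left _ hc)
            omega
        simp [bal]
        omega
termination_by sizeOf x

theorem preL (items : List (It U)) (p q : List (TSym U)) (h : flatL items = p ++ q) :
    0 ≤ excess p := by
  cases items with
  | nil =>
      simp only [flatL_nil] at h
      have : p = [] := by
        cases p with
        | nil => rfl
        | cons c t => simp at h
      simp [this]
  | cons x rest =>
      rw [flatL_cons] at h
      rcases List.append_eq_append_iff.1 h with ⟨k, hk1, hk2⟩ | ⟨k, hk1, hk2⟩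
      · have := preL rest k q hk2
        rw [hk1]
        simp [excess_flatIt]
        omega
      · rcases eq_or_ne p [] with rfl | hp
        · simp
        rcases eq_or_ne k [] with rfl | hk
        · rw [List.append_nil] at hk1
          rw [← hk1, excess_flatIt]
        have := pre_pos x p k hk1 hp hk
        omega
termination_by sizeOf items
end

end Aux

section Aux2
variable {U : Type}

lemma strOf_mem {s : List U} {c : TSym U} (hc : c ∈ strOf s) : ∃ a, c = TSym.ltr a := by
  simp only [strOf, List.mem_map] at hc
  obtain ⟨a, _, rfl⟩ := hc
  exact ⟨a, rfl⟩

lemma flatL_eq_nil {items : List (It U)} (h : flatL items = []) : items = [] := by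
  cases items with
  | nil => rfl
  | cons x rest =>
      rw [flatL_cons, List.append_eq_nil_iff] at h
      exact absurd h.1 (flatIt_ne_nil x)

lemma flatL_not_slash {items : List (It U)} {z : List (TSym U)}
    (h : flatL items = TSym.slash :: z) : False := by
  cases items with
  | nil => simp at h
  | cons x rest =>
      rw [flatL_cons] at h
      cases x with
      | ltr a => simp at h
      | tr act its => rw [flatIt_tr] at h; simp at h

lemma flatL_cons_ltr {items : List (It U)} {b : U} {z : List (TSym U)}
    (h : flatL items = TSym.ltr b :: z) :
    ∃ items', items = It.ltr b :: items' ∧ flatL items' = z := by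
  cases items with
  | nil => simp at h
  | cons x rest =>
      rw [flatL_cons] at h
      cases x with
      | ltr a =>
          simp only [flatIt_ltr, List.cons_append, List.nil_append] at h
          injection h with h1 h2
          injection h1 with h1
          subst h1
          exact ⟨rest, rfl, h2⟩
      | tr act its => rw [flatIt_tr] at h; simp at h

lemma flatL_not_ltr_slash {items : List (It U)} {a : U} {z : List (TSym U)}
    (h : flatL items = TSym.ltr a :: TSym.slash :: z) : False := by
  obtain ⟨items', rfl, h2⟩ := flatL_cons_ltr h
  exact flatL_not_slash h2

lemma flatL_first_bracket_not_cl :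
    ∀ (items : List (It U)) (m z : List (TSym U)), flatL items = m ++ TSym.cl :: z →
      (∀ c ∈ m, bal c = 0) → False := by
  intro items
  induction items with
  | nil => intro m z h _; simp at h
  | cons x rest ih =>
      intro m z h hm
      rw [flatL_cons] at h
      cases x with
      | ltr a =>
          cases m with
          | nil => simp at h
          | cons c m' =>
              simp only [flatIt_ltr, List.cons_append, List.nil_append] at h
              injection h with h1 h2
              exact ih m' z h2 (fun c hc => hm c (by simp [hc]))
      | tr act its =>
          rw [flatIt_tr] at h
          cases m with
          | nil => simp at h
          | cons c m' =>
              injection h with h1 h2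
              have := hm c (by simp)
              rw [← h1] at this
              simp [bal] at this

lemma no_open_tail {items : List (It U)} {p m : List (TSym U)}
    (h : flatL items = p ++ TSym.op :: m) (hm : ∀ c ∈ m, bal c = 0) : False := by
  have h0 : excess (flatL items) = 0 := excess_flatL items
  rw [h] at h0
  have hp : 0 ≤ excess p := preL items p _ h
  have hm0 : excess m = 0 := excess_eq_zero_of_flat hm
  simp [bal, hm0] at h0
  omega

lemma preIt (x : It U) (p q : List (TSym U)) (h : flatIt x = p ++ q) : 0 ≤ excess p := by
  rcases eq_or_ne p [] with rfl | hp
  · simp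
  rcases eq_or_ne q [] with rfl | hq
  · rw [List.append_nil] at h; rw [← h, excess_flatIt]
  exact le_trans (by norm_num) (pre_pos x p q h hp hq)

/-- The closer matching an opener with flat content is the end of the group. -/
lemma inner_match (act : Option U) (its : List (It U)) (m r : List (TSym U))
    (h : actFlat act ++ flatL its ++ [TSym.cl] = m ++ [TSym.cl] ++ r)
    (hm : ∀ c ∈ m, bal c = 0) :
    m = actFlat act ++ flatL its ∧ r = [] := by
  have h' : (actFlat act ++ flatL its) ++ [TSym.cl] = m ++ ([TSym.cl] ++ r) := by
    simpa [List.append_assoc] using h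
  rcases List.append_eq_append_iff.1 h' with ⟨k, hk1, hk2⟩ | ⟨k, hk1, hk2⟩
  · rcases k with _ | ⟨c, k'⟩
    · simp only [List.nil_append] at hk2
      have : r = [] := by
        have h2 := hk2
        simp at h2
        first | exact h2 | exact h2.symm
      subst this
      simp only [List.append_nil] at hk1
      exact ⟨hk1.symm ▸ rfl, rfl⟩
    · have := congrArg List.length hk2
      simp at this
  · rcases k with _ | ⟨c, k'⟩
    · simp only [List.append_nil] at hk1
      simp only [List.nil_append] at hk2
      have : r = [] := by simpa using hk2
      exact ⟨hk1.symm, this⟩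
    · have hc : c = TSym.cl := by
        simp only [List.cons_append] at hk2
        injection hk2 with h1 _
        exact h1.symm
      subst hc
      exfalso
      rcases List.append_eq_append_iff.1 hk1 with ⟨j, hj1, hj2⟩ | ⟨j, hj1, hj2⟩
      · exact flatL_first_bracket_not_cl its j k' hj2
          (fun c hc => hm c (by rw [hj1]; exact List.mem_append_right _ hc))
      · rcases j with _ | ⟨d, j'⟩
        · simp only [List.nil_append] at hj2
          exact flatL_first_bracket_not_cl its [] k' hj2.symm (by simp)
        · have hd : d = TSym.cl := by
            simp only [List.cons_append] at hj2
            injection hj2 with h1 _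
            exact h1.symm
          subst hd
          have : bal (TSym.cl : TSym U) = 0 :=
            bal_actFlat act _ (by rw [hj1]; exact List.mem_append_right _ (by simp))
          simp [bal] at this

end Aux2

section Moves
variable {U : Type} (Q0 : Set U) (Δ : Set (U × U × U)) (γ : U → Set U)

/-- Head steps on parsed items, mirroring the three kinds of moves. -/
inductive HStep : It U → It U → Prop where
  | init {a : U} {items : List (It U)} : a ∈ Q0 →
      HStep (It.tr none items) (It.tr (some a) items)
  | horiz {a b c : U} {items : List (It U)} : (a, b, c) ∈ Δ →
      HStep (It.tr (some a) (It.ltr b :: items)) (It.tr (some c) items)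
  | vert {a b : U} : b ∈ γ a → HStep (It.tr (some a) []) (It.ltr b)

/-- Deep steps: a head step somewhere inside an item. -/
inductive Deep : It U → It U → Prop where
  | here {x y : It U} : HStep Q0 Δ γ x y → Deep x y
  | inside {x y : It U} (act : Option U) (pre post : List (It U)) :
      Deep x y → Deep (It.tr act (pre ++ x :: post)) (It.tr act (pre ++ y :: post))

/-- Deep steps in a list of items. -/
def DeepL (s s' : List (It U)) : Prop :=
  ∃ pre x y post, Deep Q0 Δ γ x y ∧ s = pre ++ x :: post ∧ s' = pre ++ y :: post

lemma DeepL.tr {s s' : List (It U)} (act : Option U) (h : DeepL Q0 Δ γ s s') :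
    Deep Q0 Δ γ (It.tr act s) (It.tr act s') := by
  obtain ⟨pre, x, y, post, hd, rfl, rfl⟩ := h
  exact Deep.inside act pre post hd

lemma DeepL.cons {s s' : List (It U)} (x : It U) (h : DeepL Q0 Δ γ s s') :
    DeepL Q0 Δ γ (x :: s) (x :: s') := by
  obtain ⟨pre, a, b, post, hd, rfl, rfl⟩ := h
  exact ⟨x :: pre, a, b, post, hd, rfl, rfl⟩

lemma DeepL.single {x y : It U} (h : Deep Q0 Δ γ x y) : DeepL Q0 Δ γ [x] [y] :=
  ⟨[], x, y, [], h, rfl, rfl⟩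

lemma DeepL.head (rest : List (It U)) {x y : It U} (h : Deep Q0 Δ γ x y) :
    DeepL Q0 Δ γ (x :: rest) (y :: rest) :=
  ⟨[], x, y, rest, h, rfl, rfl⟩

mutual
/-- Locating a bracket-flat-bracket redex inside an item. -/
theorem locIt (x : It U) (l m r : List (TSym U))
    (h : flatIt x = l ++ (TSym.op :: (m ++ [TSym.cl])) ++ r) (hm : ∀ c ∈ m, bal c = 0) :
    ∃ (act : Option U) (sub : List (It U)) (D : It U → It U),
      flatIt (It.tr act sub) = TSym.op :: (m ++ [TSym.cl]) ∧
      D (It.tr act sub) = x ∧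
      (∀ y, flatIt (D y) = l ++ flatIt y ++ r) ∧
      (∀ y, Deep Q0 Δ γ (It.tr act sub) y → Deep Q0 Δ γ x (D y)) := by
  cases x with
  | ltr a =>
      exfalso
      have : (TSym.op : TSym U) ∈ [TSym.ltr a] := by
        rw [flatIt_ltr] at h
        rw [h]
        simp
      simp at this
  | tr act its =>
      rw [flatIt_tr] at h
      rcases l with _ | ⟨c, l'⟩
      · -- the redex starts at the opener of x
        simp only [List.nil_append, List.cons_append] at h
        injection h with _ h2
        have h3 : actFlat act ++ flatL its ++ [TSym.cl] = m ++ [TSym.cl] ++ r := by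
          simpa [List.append_assoc] using h2
        obtain ⟨hm2, rfl⟩ := inner_match act its m r h3 hm
        refine ⟨act, its, id, ?_, rfl, ?_, ?_⟩
        · rw [flatIt_tr, hm2]
        · intro y; simp
        · intro y hy; exact hy
      · -- the redex is inside x
        simp only [List.cons_append] at h
        injection h with h1 h2
        subst h1
        have h2' : actFlat act ++ (flatL its ++ [TSym.cl])
            = l' ++ ((TSym.op :: (m ++ [TSym.cl])) ++ r) := by
          simpa [List.append_assoc] using h2
        have key : ∃ l₂, l' = actFlat act ++ l₂ ∧
            flatL its ++ [TSym.cl] = l₂ ++ (TSym.op :: (m ++ [TSym.cl])) ++ r := by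
          rcases List.append_eq_append_iff.1 h2' with ⟨k, hk1, hk2⟩ | ⟨k, hk1, hk2⟩
          · exact ⟨k, hk1, by simpa [List.append_assoc] using hk2⟩
          · rcases k with _ | ⟨d, k'⟩
            · refine ⟨[], by simpa using hk1.symm, ?_⟩
              simpa [List.append_assoc] using hk2.symm
            · exfalso
              have hd : d = TSym.op := by
                simp only [List.cons_append] at hk2
                exact (List.cons.injEq _ _ _ _ ▸ hk2).1.symm
              subst hd
              have hbal : bal (TSym.op : TSym U) = 0 :=
                bal_actFlat act _ (by rw [hk1]; exact List.mem_append_right _ (by simp))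
              simp [bal] at hbal
        obtain ⟨l₂, rfl, h3⟩ := key
        have h3' : (l₂ ++ (TSym.op :: (m ++ [TSym.cl]))) ++ r = flatL its ++ [TSym.cl] := by
          simpa [List.append_assoc] using h3.symm
        have key2 : ∃ k, flatL its = l₂ ++ (TSym.op :: (m ++ [TSym.cl])) ++ k ∧
            r = k ++ [TSym.cl] := by
          rcases List.append_eq_append_iff.1 h3' with ⟨k, hk1, hk2⟩ | ⟨k, hk1, hk2⟩
          · -- flatL its = (l₂ ++ pat) ++ k, r = k ++ [cl]
            exact ⟨k, by simpa [List.append_assoc] using hk1, hk2⟩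
          · -- l₂ ++ pat = flatL its ++ k, [cl] = k ++ r
            rcases k with _ | ⟨d, k'⟩
            · simp only [List.append_nil] at hk1
              simp only [List.nil_append] at hk2
              exact ⟨[], by simpa [List.append_assoc] using hk1.symm, by simpa using hk2.symm⟩
            · have hdk : d = TSym.cl ∧ k' = [] ∧ r = [] := by
                have h6 : [TSym.cl] = d :: (k' ++ r) := by simpa using hk2
                have := (List.cons.injEq _ _ _ _ ▸ h6)
                refine ⟨this.1.symm, ?_, ?_⟩
                · have h7 := this.2.symm
                  rw [List.append_eq_nil_iff] at h7
                  exact h7.1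
                · have h7 := this.2.symm
                  rw [List.append_eq_nil_iff] at h7
                  exact h7.2
              obtain ⟨rfl, rfl, rfl⟩ := hdk
              exfalso
              have hne : flatL its = l₂ ++ TSym.op :: m := by
                symm
                apply List.append_cancel_right (bs := [TSym.cl])
                simpa [List.append_assoc] using hk1
              exact no_open_tail hne hm
        obtain ⟨k, h4, rfl⟩ := key2
        obtain ⟨act', sub, C, hC1, hC2, hC3, hC4⟩ :=
          locL its l₂ m k (by simpa [List.append_assoc] using h4) hm
        refine ⟨act', sub, fun y => It.tr act (C y), hC1, by simp only [hC2], ?_, ?_⟩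
        · intro y
          rw [flatIt_tr, hC3 y]
          simp [List.append_assoc]
        · intro y hy
          exact DeepL.tr Q0 Δ γ act (hC4 y hy)
termination_by sizeOf x

/-- Locating a bracket-flat-bracket redex inside a list of items. -/
theorem locL (items : List (It U)) (l m r : List (TSym U))
    (h : flatL items = l ++ (TSym.op :: (m ++ [TSym.cl])) ++ r) (hm : ∀ c ∈ m, bal c = 0) :
    ∃ (act : Option U) (sub : List (It U)) (C : It U → List (It U)),
      flatIt (It.tr act sub) = TSym.op :: (m ++ [TSym.cl]) ∧
      C (It.tr act sub) = items ∧
      (∀ y, flatL (C y) = l ++ flatIt y ++ r) ∧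
      (∀ y, Deep Q0 Δ γ (It.tr act sub) y → DeepL Q0 Δ γ items (C y)) := by
  cases items with
  | nil =>
      exfalso
      rw [flatL_nil] at h
      have := congrArg List.length h
      simp at this
  | cons x rest =>
      rw [flatL_cons] at h
      have h' : flatIt x ++ flatL rest = l ++ ((TSym.op :: (m ++ [TSym.cl])) ++ r) := by
        simpa [List.append_assoc] using h
      rcases List.append_eq_append_iff.1 h' with ⟨k, hk1, hk2⟩ | ⟨k, hk1, hk2⟩
      · -- l = flatIt x ++ k, flatL rest = k ++ (pat ++ r)
        obtain ⟨act', sub, C, hC1, hC2, hC3, hC4⟩ :=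
          locL rest k m r (by simpa [List.append_assoc] using hk2) hm
        refine ⟨act', sub, fun y => x :: C y, hC1, by simp only [hC2], ?_, ?_⟩
        · intro y
          rw [flatL_cons, hC3 y, hk1]
          simp [List.append_assoc]
        · intro y hy
          exact DeepL.cons Q0 Δ γ x (hC4 y hy)
      · -- flatIt x = l ++ k, pat ++ r = k ++ flatL rest
        rcases List.append_eq_append_iff.1 hk2.symm with ⟨j, hj1, hj2⟩ | ⟨j, hj1, hj2⟩
        · -- pat = k ++ j, flatL rest = j ++ r
          rcases k with _ | ⟨d, k''⟩
          · -- k = [], so flatIt x = l and flatL rest = pat ++ r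
            simp only [List.nil_append] at hj1
            obtain ⟨act', sub, C, hC1, hC2, hC3, hC4⟩ :=
              locL rest [] m r (by rw [← hj1] at hj2; simpa [List.append_assoc] using hj2) hm
            refine ⟨act', sub, fun y => x :: C y, hC1, by simp only [hC2], ?_, ?_⟩
            · intro y
              rw [flatL_cons, hC3 y]
              simp only [List.append_nil] at hk1
              rw [← hk1]
              simp
            · intro y hy
              exact DeepL.cons Q0 Δ γ x (hC4 y hy)
          · have hd : d = TSym.op := by
              simp only [List.cons_append] at hj1
              injection hj1 with h1 _
              exact h1.symm
            subst hd
            rcases j with _ | ⟨e, j'⟩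
            · -- j = [], k = pat : redex is a suffix of flatIt x
              rw [List.append_nil] at hj1
              obtain ⟨act', sub, D, hD1, hD2, hD3, hD4⟩ :=
                locIt x l m [] (by rw [hk1, ← hj1]; simp) hm
              refine ⟨act', sub, fun y => D y :: rest, hD1, by simp only [hD2], ?_, ?_⟩
              · intro y
                rw [flatL_cons, hD3 y]
                simp only [List.nil_append] at hj2
                rw [← hj2]
                simp [List.append_assoc]
              · intro y hy
                exact DeepL.head Q0 Δ γ rest (hD4 y hy)
            · -- redex straddles the end of x : impossible
              exfalso
              have hk'' : k'' ++ (e :: j') = m ++ [TSym.cl] := by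
                simp only [List.cons_append] at hj1
                injection hj1 with _ h2
                exact h2.symm
              have hek : excess k'' = 0 := by
                rcases List.append_eq_append_iff.1 hk'' with ⟨i, hi1, hi2⟩ | ⟨i, hi1, hi2⟩
                · exact excess_eq_zero_of_flat
                    (fun c hc => hm c (by rw [hi1]; exact List.mem_append_left _ hc))
                · rcases i with _ | ⟨f, i'⟩
                  · rw [List.append_nil] at hi1
                    exact excess_eq_zero_of_flat (fun c hc => hm c (hi1 ▸ hc))
                  · exfalso
                    have hlen := congrArg List.length hi2
                    simp at hlen
                    all_goals omega
              have h0 : excess (flatIt x) = 0 := excess_flatIt x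
              have hl : 0 ≤ excess l := preIt x l _ hk1
              rw [hk1] at h0
              simp [bal, hek] at h0
              omega
        · -- k = pat ++ j, r = j ++ flatL rest (redex inside x)
          obtain ⟨act', sub, D, hD1, hD2, hD3, hD4⟩ :=
            locIt x l m j (by rw [hk1, hj1]; simp [List.append_assoc]) hm
          refine ⟨act', sub, fun y => D y :: rest, hD1, by simp only [hD2], ?_, ?_⟩
          · intro y
            rw [flatL_cons, hD3 y, hj2]
            simp [List.append_assoc]
          · intro y hy
            exact DeepL.head Q0 Δ γ rest (hD4 y hy)
termination_by sizeOf items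
end

end Moves

section Sem
variable {U : Type}

/-- The horizontal transition map of `Δ`. -/
def delt (Δ : Set (U × U × U)) : U → U → Set U := fun q b => {c | (q, b, c) ∈ Δ}

/-- Possible initial head states. -/
def headOK (Q0 : Set U) : Option U → U → Prop
  | none, a => a ∈ Q0
  | some a', a => a = a'

mutual
/-- Denotational evaluation: the item (a group) can be rewritten to `⟨q/⟩`. -/
inductive EvT (Q0 : Set U) (Δ : Set (U × U × U)) (γ : U → Set U) : It U → U → Prop where
  | mk {act : Option U} {a : U} {items : List (It U)} {bs : List U} {q : U} :
      headOK Q0 act a → EvLs Q0 Δ γ items bs →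
      FASteps (delt Δ) a bs q → EvT Q0 Δ γ (It.tr act items) q

/-- Denotational evaluation: the items can be rewritten itemwise to letters. -/
inductive EvLs (Q0 : Set U) (Δ : Set (U × U × U)) (γ : U → Set U) :
    List (It U) → List U → Prop where
  | nil : EvLs Q0 Δ γ [] []
  | ltr {b : U} {s : List (It U)} {bs : List U} :
      EvLs Q0 Δ γ s bs → EvLs Q0 Δ γ (It.ltr b :: s) (b :: bs)
  | tr {x : It U} {p b : U} {s : List (It U)} {bs : List U} :
      EvT Q0 Δ γ x p → b ∈ γ p → EvLs Q0 Δ γ s bs → EvLs Q0 Δ γ (x :: s) (b :: bs)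
end

/-- An item reduces to the letter `b`. -/
def ItRed (Q0 : Set U) (Δ : Set (U × U × U)) (γ : U → Set U) (x : It U) (b : U) : Prop :=
  x = It.ltr b ∨ ∃ p, EvT Q0 Δ γ x p ∧ b ∈ γ p

variable {Q0 : Set U} {Δ : Set (U × U × U)} {γ : U → Set U}

lemma EvT_ltr {b : U} {q : U} (h : EvT Q0 Δ γ (It.ltr b) q) : False := by cases h

lemma evls_cons {x : It U} {b : U} {s : List (It U)} {bs : List U}
    (hx : ItRed Q0 Δ γ x b) (hs : EvLs Q0 Δ γ s bs) : EvLs Q0 Δ γ (x :: s) (b :: bs) := by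
  rcases hx with rfl | ⟨p, hT, hb⟩
  · exact EvLs.ltr hs
  · exact EvLs.tr hT hb hs

lemma evls_cons_inv {x : It U} {s : List (It U)} {bs : List U}
    (h : EvLs Q0 Δ γ (x :: s) bs) :
    ∃ b bs', bs = b :: bs' ∧ ItRed Q0 Δ γ x b ∧ EvLs Q0 Δ γ s bs' := by
  cases h with
  | ltr hs => exact ⟨_, _, rfl, Or.inl rfl, hs⟩
  | tr hT hb hs => exact ⟨_, _, rfl, Or.inr ⟨_, hT, hb⟩, hs⟩

lemma evls_append {s1 s2 : List (It U)} {b1 b2 : List U}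
    (h1 : EvLs Q0 Δ γ s1 b1) (h2 : EvLs Q0 Δ γ s2 b2) :
    EvLs Q0 Δ γ (s1 ++ s2) (b1 ++ b2) := by
  induction s1 generalizing b1 with
  | nil => cases h1; simpa using h2
  | cons x s ih =>
      obtain ⟨b, bs', rfl, hx, hs⟩ := evls_cons_inv h1
      exact evls_cons hx (ih hs)

lemma evls_append_inv {s1 s2 : List (It U)} {bs : List U}
    (h : EvLs Q0 Δ γ (s1 ++ s2) bs) :
    ∃ b1 b2, bs = b1 ++ b2 ∧ EvLs Q0 Δ γ s1 b1 ∧ EvLs Q0 Δ γ s2 b2 := by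
  induction s1 generalizing bs with
  | nil => exact ⟨[], bs, rfl, EvLs.nil, by simpa using h⟩
  | cons x s ih =>
      rw [List.cons_append] at h
      obtain ⟨b, bs', rfl, hx, hs⟩ := evls_cons_inv h
      obtain ⟨b1, b2, rfl, h1, h2⟩ := ih hs
      exact ⟨b :: b1, b2, rfl, evls_cons hx h1, h2⟩

lemma evls_forall₂ {items : List (It U)} {bs : List U} :
    EvLs Q0 Δ γ items bs ↔ List.Forall₂ (ItRed Q0 Δ γ) items bs := by
  constructor
  · intro h
    induction items generalizing bs with
    | nil => cases h; exact List.Forall₂.nil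
    | cons x s ih =>
        obtain ⟨b, bs', rfl, hx, hs⟩ := evls_cons_inv h
        exact List.Forall₂.cons hx (ih hs)
  · intro h
    induction h with
    | nil => exact EvLs.nil
    | cons hx _ ih => exact evls_cons hx ih

/-- Moves are closed under contexts. -/
lemma gmove_ctx (l r : List (TSym U)) {u v : List (TSym U)} (h : GMove Q0 Δ γ u v) :
    GMove Q0 Δ γ (l ++ u ++ r) (l ++ v ++ r) := by
  cases h with
  | @init l0 r0 s a ha =>
      have := GMove.init (Q0 := Q0) (Δ := Δ) (γ := γ) (l := l ++ l0) (r := r0 ++ r)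
        (s := s) ha
      simpa [List.append_assoc] using this
  | @horiz l0 r0 s a b c hd =>
      have := GMove.horiz (Q0 := Q0) (γ := γ) (l := l ++ l0) (r := r0 ++ r) (s := s) hd
      simpa [List.append_assoc] using this
  | @vert l0 r0 a b hb =>
      have := GMove.vert (Q0 := Q0) (Δ := Δ) (l := l ++ l0) (r := r0 ++ r)
        (a := a) (b := b) hb
      simpa [List.append_assoc] using this

lemma rtg_gmove_ctx (l r : List (TSym U)) {u v : List (TSym U)}
    (h : Relation.ReflTransGen (GMove Q0 Δ γ) u v) :
    Relation.ReflTransGen (GMove Q0 Δ γ) (l ++ u ++ r) (l ++ v ++ r) := by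
  induction h with
  | refl => exact Relation.ReflTransGen.refl
  | tail _ hstep ih => exact ih.tail (gmove_ctx l r hstep)

/-- A horizontal run gives moves consuming the letters. -/
lemma fa_run_moves {a : U} {bs : List U} {q : U} (h : FASteps (delt Δ) a bs q) :
    Relation.ReflTransGen (GMove Q0 Δ γ)
      (TSym.op :: TSym.ltr a :: TSym.slash :: (strOf bs ++ [TSym.cl])) (finalTree q) := by
  induction h with
  | nil p =>
      simp only [strOf, List.map_nil, List.nil_append, finalTree]
      exact Relation.ReflTransGen.refl
  | @cons a' b p s q' hp _ ih =>
      refine Relation.ReflTransGen.head ?_ ih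
      have := GMove.horiz (Q0 := Q0) (Δ := Δ) (γ := γ) (l := []) (r := []) (s := s)
        (a := a') (b := b) (c := p) hp
      simpa [strOf, List.append_assoc] using this

mutual
/-- Completeness: evaluation is realised by move sequences. -/
theorem evT_moves (x : It U) (q : U) (h : EvT Q0 Δ γ x q) :
    Relation.ReflTransGen (GMove Q0 Δ γ) (flatIt x) (finalTree q) := by
  cases x with
  | ltr b => exact absurd h EvT_ltr
  | tr act items =>
      rcases h with ⟨hhead, hls, hrun⟩
      rename_i a bs
      have step1 : Relation.ReflTransGen (GMove Q0 Δ γ) (flatIt (It.tr act items))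
          (TSym.op :: (actFlat act ++ strOf bs ++ [TSym.cl])) := by
        rw [flatIt_tr]
        have := rtg_gmove_ctx (TSym.op :: actFlat act) [TSym.cl]
          (evls_moves items bs hls)
        simpa [List.append_assoc] using this
      have step2 : Relation.ReflTransGen (GMove Q0 Δ γ)
          (TSym.op :: (actFlat act ++ strOf bs ++ [TSym.cl])) (finalTree q) := by
        cases act with
        | none =>
            refine Relation.ReflTransGen.head ?_ (fa_run_moves hrun)
            have ha : a ∈ Q0 := hhead
            have := GMove.init (Δ := Δ) (γ := γ) (l := []) (r := []) (s := bs) ha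
            simpa [actFlat, List.append_assoc] using this
        | some a' =>
            have : a = a' := hhead
            subst this
            simpa [actFlat, List.append_assoc] using fa_run_moves (Q0 := Q0) (γ := γ) hrun
      exact step1.trans step2
termination_by sizeOf x

theorem evls_moves (items : List (It U)) (bs : List U) (h : EvLs Q0 Δ γ items bs) :
    Relation.ReflTransGen (GMove Q0 Δ γ) (flatL items) (strOf bs) := by
  cases items with
  | nil =>
      cases h
      simp only [flatL_nil, strOf, List.map_nil]
      exact Relation.ReflTransGen.refl
  | cons x s =>
      obtain ⟨b, bs', rfl, hx, hs⟩ := evls_cons_inv h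
      have tailred : Relation.ReflTransGen (GMove Q0 Δ γ) (flatL s) (strOf bs') :=
        evls_moves s bs' hs
      have headred : Relation.ReflTransGen (GMove Q0 Δ γ) (flatIt x) [TSym.ltr b] := by
        rcases hx with rfl | ⟨p, hT, hb⟩
        · rw [flatIt_ltr]
        · have h1 := evT_moves x p hT
          refine h1.trans (Relation.ReflTransGen.single ?_)
          have := GMove.vert (Q0 := Q0) (Δ := Δ) (l := []) (r := []) (a := p) (b := b) hb
          simpa [finalTree] using this
      rw [flatL_cons]
      have c1 := rtg_gmove_ctx [] (flatL s) headred
      have c2 := rtg_gmove_ctx [TSym.ltr b] [] tailred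
      simp only [List.nil_append, List.append_nil] at c1 c2
      refine c1.trans ?_
      simpa [strOf] using c2
termination_by sizeOf items
end

/-- Backward preservation of evaluation along deep steps. -/
lemma bstep {x y : It U} (h : Deep Q0 Δ γ x y) : ∀ {q : U}, EvT Q0 Δ γ y q → EvT Q0 Δ γ x q := by
  induction h with
  | here hs =>
      intro q he
      cases hs with
      | init ha =>
          rcases he with ⟨hhead, hls, hrun⟩
          have : _ = _ := hhead
          subst this
          exact EvT.mk (show headOK Q0 none _ from ha) hls hrun
      | horiz hd =>
          rcases he with ⟨hhead, hls, hrun⟩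
          have : _ = _ := hhead
          subst this
          exact EvT.mk (show headOK Q0 (some _) _ from rfl) (EvLs.ltr hls)
            (FASteps.cons (show _ ∈ delt Δ _ _ from hd) hrun)
      | vert hb => exact absurd he EvT_ltr
  | @inside x' y' act pre post hinner ih =>
      intro q he
      rcases he with ⟨hhead, hls, hrun⟩
      obtain ⟨b1, b2, rfl, h1, h2⟩ := evls_append_inv hls
      obtain ⟨β, bs', rfl, hy, hs⟩ := evls_cons_inv h2
      have hx : ItRed Q0 Δ γ x' β := by
        rcases hy with heq | ⟨p, hT, hb⟩
        · subst heq
          cases hinner with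
          | here hs' =>
              cases hs' with
              | vert hb =>
                  exact Or.inr ⟨_, EvT.mk (show headOK Q0 (some _) _ from rfl)
                    EvLs.nil (FASteps.nil _), hb⟩
        · exact Or.inr ⟨p, ih hT, hb⟩
      exact EvT.mk hhead (evls_append h1 (evls_cons hx hs)) hrun

/-- Soundness of deep-step sequences. -/
lemma deep_sound {P z : It U} (h : Relation.ReflTransGen (Deep Q0 Δ γ) P z) :
    ∀ {qf : U}, z = It.tr (some qf) [] → EvT Q0 Δ γ P qf := by
  induction h using Relation.ReflTransGen.head_induction_on with
  | refl =>
      intro qf hz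
      subst hz
      exact EvT.mk (show headOK Q0 (some qf) qf from rfl) EvLs.nil (FASteps.nil _)
  | head hstep _ ih =>
      intro qf hz
      exact bstep hstep (ih hz)

/-- Only the flattening of a final item equals a final tree. -/
lemma flat_final_inv {P : It U} {qf : U} (h : flatIt P = finalTree qf) :
    P = It.tr (some qf) [] := by
  cases P with
  | ltr a =>
      exfalso
      rw [flatIt_ltr, finalTree] at h
      have := congrArg List.length h
      simp at this
  | tr act items =>
      rw [flatIt_tr, finalTree] at h
      injection h with _ h2
      cases act with
      | none =>
          exfalso
          simp only [actFlat, List.nil_append] at h2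
          have : flatL items = [TSym.ltr qf, TSym.slash] := by
            apply List.append_cancel_right (bs := [TSym.cl])
            simpa using h2
          exact flatL_not_ltr_slash this
      | some a =>
          simp only [actFlat, List.cons_append, List.nil_append] at h2
          injection h2 with h3 h4
          injection h3 with h3
          subst h3
          injection h4 with _ h5
          have : flatL items = [] := by
            have h6 : flatL items ++ [TSym.cl] = [] ++ [TSym.cl] := by simpa using h5
            exact List.append_cancel_right h6
          rw [flatL_eq_nil this]

/-- Forward simulation of a single move at the parse level. -/
lemma fwd_gen {u w : List (TSym U)} (h : GMove Q0 Δ γ u w) :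
    ∀ P : It U, u = flatIt P → ∃ P', w = flatIt P' ∧ Deep Q0 Δ γ P P' := by
  cases h with
  | @init l r s a ha =>
      intro P hP
      obtain ⟨act, sub, D, hD1, hD2, hD3, hD4⟩ := locIt Q0 Δ γ P l (strOf s) r
        (by simpa [List.append_assoc] using hP.symm) (bal_strOf s)
      -- act must be `none` and `flatL sub = strOf s`
      rw [flatIt_tr] at hD1
      injection hD1 with _ h2
      have hact : act = none ∧ flatL sub = strOf s := by
        cases act with
        | none => exact ⟨rfl, by simpa [actFlat] using h2⟩
        | some a' =>
            exfalso
            simp only [actFlat, List.cons_append, List.nil_append] at h2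
            have h2' : strOf s ++ [TSym.cl] = TSym.ltr a' :: TSym.slash :: (flatL sub ++ [TSym.cl]) := by
              simpa [List.append_assoc] using h2.symm
            cases s with
            | nil => simp [strOf] at h2'
            | cons u us =>
                simp only [strOf, List.map_cons, List.cons_append] at h2'
                injection h2' with _ h3
                cases us with
                | nil => simp at h3
                | cons u' us' =>
                    simp only [List.map_cons, List.cons_append] at h3
                    injection h3 with h4 _
                    exact (by simp : (TSym.ltr u' : TSym U) ≠ TSym.slash) h4
      obtain ⟨rfl, hsub⟩ := hact
      refine ⟨D (It.tr (some a) sub), ?_, hD4 _ (Deep.here (HStep.init ha))⟩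
      rw [hD3]
      rw [flatIt_tr]
      simp [actFlat, hsub, List.append_assoc]
  | @horiz l r s a b c hd =>
      intro P hP
      obtain ⟨act, sub, D, hD1, hD2, hD3, hD4⟩ := locIt Q0 Δ γ P l
        (TSym.ltr a :: TSym.slash :: TSym.ltr b :: strOf s) r
        (by simpa [List.append_assoc] using hP.symm)
        (by
          intro cc hcc
          simp only [List.mem_cons] at hcc
          rcases hcc with rfl | rfl | rfl | hcc
          · rfl
          · rfl
          · rfl
          · exact bal_strOf s cc hcc)
      rw [flatIt_tr] at hD1
      injection hD1 with _ h2
      have hact : act = some a ∧ flatL sub = TSym.ltr b :: strOf s := by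
        cases act with
        | none =>
            exfalso
            simp only [actFlat, List.nil_append] at h2
            have : flatL sub = TSym.ltr a :: TSym.slash :: (TSym.ltr b :: strOf s) := by
              apply List.append_cancel_right (bs := [TSym.cl])
              simpa [List.append_assoc] using h2
            exact flatL_not_ltr_slash this
        | some a' =>
            simp only [actFlat, List.cons_append, List.nil_append] at h2
            injection h2 with h3 h4
            injection h3 with h3
            subst h3
            injection h4 with _ h5
            refine ⟨rfl, ?_⟩
            apply List.append_cancel_right (bs := [TSym.cl])
            simpa [List.append_assoc] using h5
      obtain ⟨rfl, hsub⟩ := hact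
      obtain ⟨sub', rfl, hsub'⟩ := flatL_cons_ltr hsub
      refine ⟨D (It.tr (some c) sub'), ?_, hD4 _ (Deep.here (HStep.horiz hd))⟩
      rw [hD3, flatIt_tr]
      simp [actFlat, hsub', List.append_assoc]
  | @vert l r a b hb =>
      intro P hP
      obtain ⟨act, sub, D, hD1, hD2, hD3, hD4⟩ := locIt Q0 Δ γ P l
        [TSym.ltr a, TSym.slash] r
        (by simpa [List.append_assoc] using hP.symm)
        (by
          intro cc hcc
          simp only [List.mem_cons] at hcc
          rcases hcc with rfl | rfl | hcc
          · rfl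
          · rfl
          · simp at hcc)
      rw [flatIt_tr] at hD1
      injection hD1 with _ h2
      have hact : act = some a ∧ sub = [] := by
        cases act with
        | none =>
            exfalso
            simp only [actFlat, List.nil_append] at h2
            have : flatL sub = [TSym.ltr a, TSym.slash] := by
              apply List.append_cancel_right (bs := [TSym.cl])
              simpa using h2
            exact flatL_not_ltr_slash this
        | some a' =>
            simp only [actFlat, List.cons_append, List.nil_append] at h2
            injection h2 with h3 h4
            injection h3 with h3
            subst h3
            injection h4 with _ h5
            refine ⟨rfl, flatL_eq_nil ?_⟩
            have h6 : flatL sub ++ [TSym.cl] = [] ++ [TSym.cl] := by simpa using h5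
            exact List.append_cancel_right h6
      obtain ⟨rfl, rfl⟩ := hact
      exact ⟨D (It.ltr b), by rw [hD3, flatIt_ltr], hD4 _ (Deep.here (HStep.vert hb))⟩

/-- Forward simulation of move sequences. -/
lemma fwd_rtg {u w : List (TSym U)} (h : Relation.ReflTransGen (GMove Q0 Δ γ) u w) :
    ∀ P : It U, u = flatIt P → ∃ P', w = flatIt P' ∧
      Relation.ReflTransGen (Deep Q0 Δ γ) P P' := by
  induction h using Relation.ReflTransGen.head_induction_on with
  | refl => exact fun P hP => ⟨P, hP, Relation.ReflTransGen.refl⟩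
  | head hstep _ ih =>
      intro P hP
      subst hP
      obtain ⟨P₁, rfl, hd⟩ := fwd_gen hstep P rfl
      obtain ⟨P', rfl, hrtg⟩ := ih P₁ rfl
      exact ⟨P', rfl, hrtg.head hd⟩

/-- The main generic equivalence: acceptance equals evaluation. -/
theorem accepts_iff_evT (P : It U) (Qf : Set U) :
    GAccepts Q0 Δ γ Qf (flatIt P) ↔ ∃ qf ∈ Qf, EvT Q0 Δ γ P qf := by
  constructor
  · rintro ⟨qf, hqf, hrtg⟩
    obtain ⟨P', hP', hd⟩ := fwd_rtg hrtg P rfl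
    exact ⟨qf, hqf, deep_sound hd (flat_final_inv hP'.symm)⟩
  · rintro ⟨qf, hqf, hev⟩
    exact ⟨qf, hqf, evT_moves P qf hev⟩

end Sem

section Trees
variable {U V : Type}

/-- Items that are (contents of) source trees over the alphabet `Sa`. -/
inductive GoodIt (Sa : Set U) : It U → Prop where
  | ltr {a : U} : a ∈ Sa → GoodIt Sa (It.ltr a)
  | tr {items : List (It U)} : (∀ x ∈ items, GoodIt Sa x) → GoodIt Sa (It.tr none items)

/-- Every tree of `T(Σ)` parses into a list of good items. -/
lemma tree_parse {Sa : Set U} {t : List (TSym U)} (h : IsTree (ltrs Sa) t) :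
    ∃ items, (∀ x ∈ items, GoodIt Sa x) ∧ t = TSym.op :: (flatL items ++ [TSym.cl]) := by
  induction h with
  | nil => exact ⟨[], by simp, by simp⟩
  | single hx =>
      obtain ⟨a, ha, rfl⟩ := hx
      exact ⟨[It.ltr a], by
        intro x hx
        simp only [List.mem_singleton] at hx
        subst hx
        exact GoodIt.ltr ha, by simp⟩
  | @concat x y h1 h2 ih1 ih2 =>
      obtain ⟨i1, g1, e1⟩ := ih1
      obtain ⟨i2, g2, e2⟩ := ih2
      have ex : x = flatL i1 := by
        injection e1 with _ e1'
        exact List.append_cancel_right e1'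
      have ey : y = flatL i2 := by
        injection e2 with _ e2'
        exact List.append_cancel_right e2'
      refine ⟨i1 ++ i2, ?_, ?_⟩
      · intro z hz
        rcases List.mem_append.1 hz with hz | hz
        · exact g1 z hz
        · exact g2 z hz
      · rw [ex, ey, flatL_append]
  | encap h ih =>
      obtain ⟨i, g, e⟩ := ih
      refine ⟨[It.tr none i], ?_, ?_⟩
      · intro z hz
        simp only [List.mem_singleton] at hz
        subst hz
        exact GoodIt.tr g
      · rw [e, flatL_cons, flatL_nil, List.append_nil, flatIt_tr]
        simp [actFlat]

/-- Conversely, good item lists flatten to trees of `T(Σ)`. -/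
theorem parse_tree_aux {Sa : Set U} :
    ∀ (n : ℕ) (items : List (It U)), sizeOf items = n → (∀ x ∈ items, GoodIt Sa x) →
      IsTree (ltrs Sa) (TSym.op :: (flatL items ++ [TSym.cl])) := by
  intro n
  induction n using Nat.strong_induction_on with
  | _ n ih =>
      intro items hn h
      subst hn
      cases items with
      | nil =>
          simp only [flatL_nil, List.nil_append]
          exact IsTree.nil
      | cons x rest =>
          have hx : IsTree (ltrs Sa) (TSym.op :: (flatIt x ++ [TSym.cl])) := by
            cases x with
            | ltr a =>
                have hg := h _ List.mem_cons_self
                cases hg with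
                | ltr ha =>
                    rw [flatIt_ltr]
                    exact IsTree.single ⟨a, ha, rfl⟩
            | tr act its =>
                have hg := h _ List.mem_cons_self
                cases hg with
                | tr hits =>
                    have hlt : sizeOf its < sizeOf (It.tr none its :: rest) := by
                      simp only [List.cons.sizeOf_spec, It.tr.sizeOf_spec]
                      omega
                    have hin := ih (sizeOf its) hlt its rfl hits
                    have := IsTree.encap hin
                    rw [flatIt_tr]
                    simpa [actFlat] using this
          have hlt2 : sizeOf rest < sizeOf (x :: rest) := by
            simp only [List.cons.sizeOf_spec]
            have : 0 < sizeOf x := by cases x <;> simp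
            omega
          have hrest : IsTree (ltrs Sa) (TSym.op :: (flatL rest ++ [TSym.cl])) :=
            ih (sizeOf rest) hlt2 rest rfl (fun z hz => h z (List.mem_cons_of_mem _ hz))
          have := IsTree.concat hx hrest
          rw [flatL_cons]
          exact this

theorem parse_tree {Sa : Set U} (items : List (It U)) (h : ∀ x ∈ items, GoodIt Sa x) :
    IsTree (ltrs Sa) (TSym.op :: (flatL items ++ [TSym.cl])) :=
  parse_tree_aux (sizeOf items) items rfl h

@[simp] lemma treeRel_nil (f : U → V) : treeRel f [] = [] := rfl

@[simp] lemma treeRel_cons (f : U → V) (c : TSym U) (t : List (TSym U)) :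
    treeRel f (c :: t) = symRel f c :: treeRel f t := rfl

@[simp] lemma treeRel_append (f : U → V) (s t : List (TSym U)) :
    treeRel f (s ++ t) = treeRel f s ++ treeRel f t := by simp [treeRel]

@[simp] lemma symRel_op (f : U → V) : symRel f TSym.op = TSym.op := rfl
@[simp] lemma symRel_cl (f : U → V) : symRel f TSym.cl = TSym.cl := rfl
@[simp] lemma symRel_slash (f : U → V) : symRel f TSym.slash = TSym.slash := rfl
@[simp] lemma symRel_ltr (f : U → V) (a : U) : symRel f (TSym.ltr a) = TSym.ltr (f a) := rfl

/-- Renaming preserves treehood. -/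
lemma isTree_treeRel {Sa : Set U} {t : List (TSym U)} (f : U → V)
    (h : IsTree (ltrs Sa) t) : IsTree (ltrs (f '' Sa)) (treeRel f t) := by
  induction h with
  | nil => exact IsTree.nil
  | single hx =>
      obtain ⟨a, ha, rfl⟩ := hx
      exact IsTree.single ⟨f a, Set.mem_image_of_mem f ha, rfl⟩
  | @concat x y h1 h2 ih1 ih2 =>
      have := IsTree.concat (x := treeRel f x) (y := treeRel f y)
        (by simpa using ih1) (by simpa using ih2)
      simpa using this
  | encap h ih =>
      have := IsTree.encap ih
      simpa using this

lemma treeRel_shape_inv {f : U → V} {t : List (TSym U)} {x : List (TSym V)}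
    (h : treeRel f t = TSym.op :: (x ++ [TSym.cl])) :
    ∃ x0, t = TSym.op :: (x0 ++ [TSym.cl]) ∧ treeRel f x0 = x := by
  cases t with
  | nil => simp [treeRel] at h
  | cons c z =>
      rw [treeRel_cons] at h
      injection h with h1 h2
      have hc : c = TSym.op := by cases c <;> simp_all
      subst hc
      rw [show treeRel f z = List.map (symRel f) z from rfl, List.map_eq_append_iff] at h2
      obtain ⟨x0, y0, rfl, hx0, hy0⟩ := h2
      cases y0 with
      | nil => simp at hy0
      | cons d y1 =>
          cases y1 with
          | nil =>
              simp only [List.map_cons, List.map_nil] at hy0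
              have hd : d = TSym.cl := by
                injection hy0 with h3 _
                cases d <;> simp_all
              subst hd
              exact ⟨x0, rfl, hx0⟩
          | cons d' y2 => simp at hy0

/-- Renamed trees come from trees. -/
lemma isTree_treeRel_inv {Sa : Set U} (f : U → V) {t' : List (TSym V)}
    (h : IsTree (ltrs (f '' Sa)) t') :
    ∃ t, IsTree (ltrs Sa) t ∧ t' = treeRel f t := by
  induction h with
  | nil => exact ⟨[TSym.op, TSym.cl], IsTree.nil, by simp [treeRel]⟩
  | single hx =>
      obtain ⟨b, ⟨a, ha, rfl⟩, rfl⟩ := hx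
      exact ⟨[TSym.op, TSym.ltr a, TSym.cl], IsTree.single ⟨a, ha, rfl⟩, by simp [treeRel]⟩
  | concat h1 h2 ih1 ih2 =>
      obtain ⟨t1, ht1, e1⟩ := ih1
      obtain ⟨t2, ht2, e2⟩ := ih2
      obtain ⟨x0, rfl, hx0⟩ := treeRel_shape_inv e1.symm
      obtain ⟨y0, rfl, hy0⟩ := treeRel_shape_inv e2.symm
      refine ⟨TSym.op :: ((x0 ++ y0) ++ [TSym.cl]), IsTree.concat ht1 ht2, ?_⟩
      simp [hx0, hy0]
  | encap h ih =>
      obtain ⟨t0, ht0, rfl⟩ := ih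
      exact ⟨TSym.op :: (t0 ++ [TSym.cl]), IsTree.encap ht0, by simp⟩

/-- Renaming of items. -/
def mapIt (f : U → V) : It U → It V
  | It.ltr a => It.ltr (f a)
  | It.tr act items => It.tr (act.map f) (items.attach.map fun z => mapIt f z.1)
  decreasing_by
    simp only [It.tr.sizeOf_spec]
    have h := List.sizeOf_lt_of_mem z.2
    omega

@[simp] lemma mapIt_ltr (f : U → V) (a : U) : mapIt f (It.ltr a) = It.ltr (f a) := by rw [mapIt]

lemma mapIt_tr (f : U → V) (act : Option U) (items : List (It U)) :
    mapIt f (It.tr act items) = It.tr (act.map f) (items.map (mapIt f)) := by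
  rw [mapIt, List.attach_map_val]

lemma actFlat_map (f : U → V) (act : Option U) :
    actFlat (act.map f) = treeRel f (actFlat act) := by
  cases act <;> simp [actFlat, treeRel]

mutual
theorem flatIt_mapIt (f : U → V) (x : It U) :
    flatIt (mapIt f x) = treeRel f (flatIt x) := by
  cases x with
  | ltr a => simp
  | tr act items =>
      rw [mapIt_tr, flatIt_tr, flatIt_tr, actFlat_map, flatL_mapIt f items]
      simp [treeRel]
termination_by sizeOf x

theorem flatL_mapIt (f : U → V) (items : List (It U)) :
    flatL (items.map (mapIt f)) = treeRel f (flatL items) := by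
  cases items with
  | nil => simp
  | cons x rest =>
      rw [List.map_cons, flatL_cons, flatL_cons, flatIt_mapIt f x, flatL_mapIt f rest]
      simp
termination_by sizeOf items
end

end Trees

section Core
variable {U : Type}

/-- Last-state analysis of a horizontal run. -/
lemma fa_last {δ : U → U → Set U} {a : U} {bs : List U} {q : U}
    (h : FASteps δ a bs q) : q = a ∨ ∃ p b, q ∈ δ p b := by
  induction h with
  | nil => exact Or.inl rfl
  | @cons a' b p s q' hp _ ih =>
      rcases ih with rfl | h
      · exact Or.inr ⟨a', b, hp⟩
      · exact Or.inr h

variable (Sa Q Qf Q0 : Set U) (Δ : Set (U × U × U)) (γ : U → Set U)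

/-- The value of an item: letters map to singletons, groups to their
evaluation set. -/
def sval : It U → Set U
  | It.ltr a => {a}
  | It.tr act items => {q | EvT Q0 Δ γ (It.tr act items) q}

@[simp] lemma sval_ltr (a : U) : sval Q0 Δ γ (It.ltr a) = {a} := rfl

lemma sval_tr (act : Option U) (items : List (It U)) :
    sval Q0 Δ γ (It.tr act items) = {q | EvT Q0 Δ γ (It.tr act items) q} := rfl

variable {Sa Q Qf Q0 Δ γ}

lemma evT_mem_Q (hwf : GWF Sa Q Qf Q0 Δ γ) {items : List (It U)} {q : U}
    (h : EvT Q0 Δ γ (It.tr none items) q) : q ∈ Q := by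
  rcases h with ⟨hhead, _, hrun⟩
  rcases fa_last hrun with rfl | ⟨p, b, hd⟩
  · exact hwf.2.2.2.1 hhead
  · exact (hwf.2.2.2.2.1 _ hd).2.2

lemma evT_not_Sa (hpure : PureG Sa Q Qf Q0 Δ γ) {items : List (It U)} {q : U}
    (h : EvT Q0 Δ γ (It.tr none items) q) : q ∉ Sa := by
  rcases h with ⟨hhead, _, hrun⟩
  rcases fa_last hrun with rfl | ⟨p, b, hd⟩
  · exact (hpure.2.2.2.1 hhead).2
  · exact (hpure.1 _ hd).2

lemma sval_sub (hwf : GWF Sa Q Qf Q0 Δ γ) {x : It U} (hg : GoodIt Sa x) :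
    sval Q0 Δ γ x ⊆ Q := by
  cases hg with
  | ltr ha =>
      intro q hq
      rw [sval_ltr, Set.mem_singleton_iff] at hq
      subst hq
      exact hwf.2.1 ha
  | tr hits =>
      intro q hq
      rw [sval_tr, Set.mem_setOf_eq] at hq
      exact evT_mem_Q hwf hq

/-- The extended `γ` of the value of a good item captures exactly the
letters the item can reduce to. -/
lemma gammaExt_sval (hpure : PureG Sa Q Qf Q0 Δ γ) {x : It U} (hg : GoodIt Sa x) :
    gammaExt Sa γ (sval Q0 Δ γ x) = {b | ItRed Q0 Δ γ x b} := by
  ext c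
  cases hg with
  | @ltr a ha =>
      simp only [sval_ltr, gammaExt, Set.mem_setOf_eq, Set.mem_singleton_iff, ItRed]
      constructor
      · rintro ⟨b, rfl, hc | ⟨rfl, _⟩⟩
        · rw [hpure.2.1 _ ha] at hc
          exact absurd hc (Set.notMem_empty c)
        · exact Or.inl rfl
      · rintro (h | ⟨p, hT, _⟩)
        · injection h with h
          exact ⟨a, rfl, Or.inr ⟨h.symm, ha⟩⟩
        · exact absurd hT EvT_ltr
  | @tr items hits =>
      simp only [sval_tr, gammaExt, Set.mem_setOf_eq, ItRed]
      constructor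
      · rintro ⟨b, hb, hc | ⟨rfl, hbs⟩⟩
        · exact Or.inr ⟨b, hb, hc⟩
        · exact absurd hbs (evT_not_Sa hpure hb)
      · rintro (h | ⟨p, hT, hb⟩)
        · exact absurd h (by simp)
        · exact ⟨p, hT, Or.inl hb⟩

/-- Membership in the iterated subset transition. -/
lemma mem_fold (Sa : Set U) (Δ : Set (U × U × U)) (γ : U → Set U) :
    ∀ (Bs : List (Set U)) (S0 : Set U) (q : U),
      q ∈ List.foldl (subsetDelta Sa γ Δ) S0 Bs ↔
        ∃ a ∈ S0, ∃ bs, List.Forall₂ (fun B b => b ∈ gammaExt Sa γ B) Bs bs ∧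
          FASteps (delt Δ) a bs q := by
  intro Bs
  induction Bs with
  | nil =>
      intro S0 q
      simp only [List.foldl_nil]
      constructor
      · intro h
        exact ⟨q, h, [], List.Forall₂.nil, FASteps.nil q⟩
      · rintro ⟨a, ha, bs, hf, hrun⟩
        cases hf
        cases hrun
        exact ha
  | cons B Bs ih =>
      intro S0 q
      rw [List.foldl_cons, ih]
      constructor
      · rintro ⟨a1, ha1, bs, hf, hrun⟩
        obtain ⟨a, ha, b, hb, hd⟩ := ha1
        exact ⟨a, ha, b :: bs, List.Forall₂.cons hb hf,
          FASteps.cons (show a1 ∈ delt Δ a b from hd) hrun⟩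
      · rintro ⟨a, ha, bs, hf, hrun⟩
        cases hf with
        | cons hb hf' =>
            cases hrun with
            | cons hd hrun' =>
                exact ⟨_, ⟨a, ha, _, hb, hd⟩, _, hf', hrun'⟩

lemma subsetDelta_sub (hwf : GWF Sa Q Qf Q0 Δ γ) (A B : Set U) :
    subsetDelta Sa γ Δ A B ⊆ Q := by
  rintro c ⟨a, _, b, _, hd⟩
  exact (hwf.2.2.2.2.1 _ hd).2.2

/-- On subsets of `Q`, runs of the subset automaton compute the fold. -/
lemma fa_subset_iff (hwf : GWF Sa Q Qf Q0 Δ γ) :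
    ∀ (Bs : List (Set U)) (S0 : Set U), S0 ⊆ Q → (∀ B ∈ Bs, B ⊆ Q) →
      ∀ q' : Set U, FASteps (delt (subsetRules Sa γ Δ Q)) S0 Bs q' ↔
        q' = List.foldl (subsetDelta Sa γ Δ) S0 Bs := by
  intro Bs
  induction Bs with
  | nil =>
      intro S0 _ _ q'
      simp only [List.foldl_nil]
      constructor
      · intro h; cases h; rfl
      · rintro rfl; exact FASteps.nil _
  | cons B Bs ih =>
      intro S0 hS0 hBs q'
      rw [List.foldl_cons]
      constructor
      · intro h
        cases h with
        | @cons _ _ p _ _ hT hrun =>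
            obtain ⟨_, _, hTeq⟩ := hT
            have hTeq' : p = subsetDelta Sa γ Δ S0 B := hTeq
            subst hTeq'
            exact (ih _ (subsetDelta_sub hwf _ _) (fun B hB => hBs B (by simp [hB])) q').1 hrun
      · rintro rfl
        exact FASteps.cons
          (show _ ∈ delt (subsetRules Sa γ Δ Q) S0 B from
            ⟨hS0, hBs B (by simp), rfl⟩)
          ((ih _ (subsetDelta_sub hwf _ _) (fun B hB => hBs B (by simp [hB])) _).2 rfl)

lemma forall₂_fun_eq {α β : Type} (f : α → β) (l : List α) (l' : List β) :
    List.Forall₂ (fun a b => b = f a) l l' ↔ l' = l.map f := by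
  constructor
  · intro h
    induction h with
    | nil => rfl
    | cons h _ ih => simp [ih, h]
  · rintro rfl
    induction l with
    | nil => exact List.Forall₂.nil
    | cons a l ih => exact List.Forall₂.cons rfl ih

lemma forall₂_congr_mem {α β : Type} {R S : α → β → Prop} {l : List α}
    (h : ∀ a ∈ l, ∀ b, R a b ↔ S a b) {l' : List β} :
    List.Forall₂ R l l' ↔ List.Forall₂ S l l' := by
  induction l generalizing l' with
  | nil =>
      constructor <;> intro hf <;> cases hf <;> exact List.Forall₂.nil
  | cons a l ih =>
      constructor
      · intro hf
        cases hf with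
        | cons hab hf' =>
            exact List.Forall₂.cons ((h a (by simp) _).1 hab)
              ((ih (fun a ha b => h a (by simp [ha]) b)).1 hf')
      · intro hf
        cases hf with
        | cons hab hf' =>
            exact List.Forall₂.cons ((h a (by simp) _).2 hab)
              ((ih (fun a ha b => h a (by simp [ha]) b)).2 hf')

end Core

section Main
variable {U : Type} {Sa Q Qf Q0 : Set U} {Δ : Set (U × U × U)} {γ : U → Set U}

lemma itRed'_tr_iff {act' : Option (Set U)} {L' : List (It (Set U))} {B : Set U}
    {Q0' : Set (Set U)} {Δ' : Set (Set U × Set U × Set U)} :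
    ItRed Q0' Δ' (fun a => {a}) (It.tr act' L') B ↔ EvT Q0' Δ' (fun a => {a}) (It.tr act' L') B := by
  constructor
  · rintro (h | ⟨p, hT, hB⟩)
    · exact absurd h (by simp)
    · rw [Set.mem_singleton_iff] at hB
      subst hB
      exact hT
  · intro h
    exact Or.inr ⟨B, h, rfl⟩

/-- The evaluation of an inactive group as an existential. -/
lemma evT_tr_none_iff {Q0' : Set U} {Δ' : Set (U × U × U)} {γ' : U → Set U}
    {items : List (It U)} {q : U} :
    EvT Q0' Δ' γ' (It.tr none items) q ↔
      ∃ a ∈ Q0', ∃ bs, EvLs Q0' Δ' γ' items bs ∧ FASteps (delt Δ') a bs q := by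
  constructor
  · rintro ⟨hhead, hls, hrun⟩
    exact ⟨_, hhead, _, hls, hrun⟩
  · rintro ⟨a, ha, bs, hls, hrun⟩
    exact EvT.mk (show headOK Q0' none a from ha) hls hrun

/-- The main subset-construction invariant. -/
theorem core_iff (hwf : GWF Sa Q Qf Q0 Δ γ) (hpure : PureG Sa Q Qf Q0 Δ γ) :
    ∀ (n : ℕ) (x : It U), sizeOf x = n → GoodIt Sa x →
      ∀ B : Set U,
        ItRed {Q0} (subsetRules Sa γ Δ Q) (fun a => {a}) (mapIt sing x) B ↔
          B = sval Q0 Δ γ x := by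
  intro n
  induction n using Nat.strong_induction_on with
  | _ n ih =>
      intro x hn hg B
      subst hn
      cases hg with
      | @ltr a ha =>
          rw [mapIt_ltr, sval_ltr]
          constructor
          · rintro (h | ⟨p, hT, _⟩)
            · injection h with h
              exact h.symm
            · exact absurd hT EvT_ltr
          · rintro rfl
            exact Or.inl rfl
      | @tr items hits =>
          have hmap : mapIt sing (It.tr none items) =
              It.tr none (items.map (mapIt sing)) := by
            rw [mapIt_tr]; rfl
          rw [hmap, itRed'_tr_iff, evT_tr_none_iff]
          have hihx : ∀ x' ∈ items, ∀ B' : Set U,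
              ItRed {Q0} (subsetRules Sa γ Δ Q) (fun a => {a}) (mapIt sing x') B' ↔
                B' = sval Q0 Δ γ x' := by
            intro x' hx' B'
            have hlt : sizeOf x' < sizeOf (It.tr (none : Option U) items) := by
              have := List.sizeOf_lt_of_mem hx'
              simp only [It.tr.sizeOf_spec]
              omega
            exact ih (sizeOf x') hlt x' rfl (hits x' hx') B'
          have hls_iff : ∀ bs' : List (Set U),
              EvLs {Q0} (subsetRules Sa γ Δ Q) (fun a => {a}) (items.map (mapIt sing)) bs' ↔
                bs' = items.map (sval Q0 Δ γ) := by
            intro bs'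
            rw [evls_forall₂, List.forall₂_map_left_iff, ← forall₂_fun_eq]
            exact forall₂_congr_mem (fun x' hx' B' => hihx x' hx' B')
          have hsub : ∀ B' ∈ items.map (sval Q0 Δ γ), B' ⊆ Q := by
            intro B' hB'
            rw [List.mem_map] at hB'
            obtain ⟨x', hx', rfl⟩ := hB'
            exact sval_sub hwf (hits x' hx')
          have hfoldeq : List.foldl (subsetDelta Sa γ Δ) Q0 (items.map (sval Q0 Δ γ)) =
              sval Q0 Δ γ (It.tr none items) := by
            ext q
            rw [mem_fold, sval_tr, Set.mem_setOf_eq, evT_tr_none_iff]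
            constructor
            · rintro ⟨a, ha, bs, hf, hrun⟩
              refine ⟨a, ha, bs, ?_, hrun⟩
              rw [evls_forall₂]
              rw [List.forall₂_map_left_iff] at hf
              refine (forall₂_congr_mem ?_).1 hf
              intro x' hx' b
              rw [gammaExt_sval hpure (hits x' hx'), Set.mem_setOf_eq]
            · rintro ⟨a, ha, bs, hls, hrun⟩
              refine ⟨a, ha, bs, ?_, hrun⟩
              rw [List.forall₂_map_left_iff]
              rw [evls_forall₂] at hls
              refine (forall₂_congr_mem ?_).2 hls
              intro x' hx' b
              rw [gammaExt_sval hpure (hits x' hx'), Set.mem_setOf_eq]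
          constructor
          · rintro ⟨a', ha', bs', hls, hrun⟩
            rw [Set.mem_singleton_iff] at ha'
            subst ha'
            rw [hls_iff] at hls
            subst hls
            rw [fa_subset_iff hwf _ _ hwf.2.2.2.1 hsub] at hrun
            rw [hrun, hfoldeq]
          · rintro rfl
            refine ⟨Q0, rfl, items.map (sval Q0 Δ γ), (hls_iff _).2 rfl, ?_⟩
            rw [fa_subset_iff hwf _ _ hwf.2.2.2.1 hsub, hfoldeq]

/-- Acceptance transfers along the subset construction. -/
lemma accept_transfer (hwf : GWF Sa Q Qf Q0 Δ γ) (hpure : PureG Sa Q Qf Q0 Δ γ)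
    {items : List (It U)} (hg : ∀ x ∈ items, GoodIt Sa x) :
    GAccepts {Q0} (subsetRules Sa γ Δ Q) (fun a => {a}) (subsetFinals Q Qf)
        (flatIt (mapIt sing (It.tr none items))) ↔
      GAccepts Q0 Δ γ Qf (flatIt (It.tr none items)) := by
  rw [accepts_iff_evT, accepts_iff_evT]
  have hgood : GoodIt Sa (It.tr none items) := GoodIt.tr hg
  have hEvT' : ∀ q' : Set U,
      EvT {Q0} (subsetRules Sa γ Δ Q) (fun a => {a}) (mapIt sing (It.tr none items)) q' ↔
        q' = sval Q0 Δ γ (It.tr none items) := by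
    intro q'
    rw [← core_iff hwf hpure (sizeOf (It.tr (none : Option U) items)) _ rfl hgood q']
    rw [show mapIt sing (It.tr none items) = It.tr none (items.map (mapIt sing)) by
      rw [mapIt_tr]; rfl]
    exact itRed'_tr_iff.symm
  constructor
  · rintro ⟨q', hq', hev⟩
    rw [hEvT' q'] at hev
    subst hev
    obtain ⟨qf, hqf1, hqf2⟩ := hq'.2
    exact ⟨qf, hqf2, hqf1⟩
  · rintro ⟨qf, hqf, hev⟩
    refine ⟨sval Q0 Δ γ (It.tr none items),
      ⟨sval_sub hwf hgood, ⟨qf, hev, hqf⟩⟩, (hEvT' _).2 rfl⟩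

end Main

/-- For any GNFSTA with pure states `A = (Σ, Q, Q_f, Q₀, Δ, γ)`
there exists an equivalent deterministic FSTA: the subset-construction DFSTA
`A' = (Σ', 2^Q, Q'_f, Q₀, Δ')` over the alphabet `Σ' = {{a} | a ∈ Σ}`, with
`Q'_f = {q' | q' ∩ Q_f ≠ ∅}` and
`Δ'(a', b') = {c | (a,b) → c ∈ Δ, a ∈ a', b ∈ γ(b')}` (with `γ` extended by
`γ(a) = {a}` on `Σ` and by unions over sets), is a well-formed deterministic
FSTA recognising exactly the image of `L(A)` under the bijection
`T(Σ) → T(Σ')` induced by `a ↦ {a}`. -/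
theorem subset_construction {U : Type} (Sa Q Qf Q0 : Set U)
    (Δ : Set (U × U × U)) (γ : U → Set U)
    (hwf : GWF Sa Q Qf Q0 Δ γ) (hpure : PureG Sa Q Qf Q0 Δ γ) :
    NWF (sing '' Sa) {q' : Set U | q' ⊆ Q} (subsetFinals Q Qf) Q0 (subsetRules Sa γ Δ Q) ∧
    Deterministic (subsetRules Sa γ Δ Q) ∧
    NLang (sing '' Sa) Q0 (subsetRules Sa γ Δ Q) (subsetFinals Q Qf)
      = treeRel sing '' GLang Sa Q0 Δ γ Qf := by
  refine ⟨⟨Set.Finite.finite_subsets hwf.1, ?_, ?_, ?_, ?_⟩, ?_, ?_⟩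
  · rintro _ ⟨a, ha, rfl⟩
    simpa [sing] using hwf.2.1 ha
  · exact fun q' h => h.1
  · exact hwf.2.2.2.1
  · rintro p hp
    exact ⟨hp.1, hp.2.1, hp.2.2 ▸ subsetDelta_sub hwf _ _⟩
  · intro a b c₁ c₂ h1 h2
    exact h1.2.2.trans h2.2.2.symm
  · ext t'
    simp only [NLang, GLang, Set.mem_setOf_eq, Set.mem_image]
    constructor
    · rintro ⟨htree, hacc⟩
      obtain ⟨t, ht, rfl⟩ := isTree_treeRel_inv sing htree
      obtain ⟨items, hgood, rfl⟩ := tree_parse ht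
      have hPt : TSym.op :: (flatL items ++ [TSym.cl]) = flatIt (It.tr none items) := by
        rw [flatIt_tr]; simp [actFlat]
      rw [hPt, ← flatIt_mapIt] at hacc
      rw [accept_transfer hwf hpure hgood] at hacc
      refine ⟨_, ⟨ht, ?_⟩, rfl⟩
      rw [hPt]
      exact hacc
    · rintro ⟨t, ⟨ht, hacc⟩, rfl⟩
      refine ⟨isTree_treeRel sing ht, ?_⟩
      obtain ⟨items, hgood, rfl⟩ := tree_parse ht
      have hPt : TSym.op :: (flatL items ++ [TSym.cl]) = flatIt (It.tr none items) := by
        rw [flatIt_tr]; simp [actFlat]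
      rw [hPt, ← flatIt_mapIt]
      rw [accept_transfer hwf hpure hgood]
      rw [hPt] at hacc
      exact hacc

end StringTree
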